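/- arXiv:1704.02309 — 5 statements merged into one kernel-verified Lean document; each statement's English description precedes it below -/
import Mathlib

section
/- For n ≥ 2, the identity matrix on ℂ^{n²} cannot be written as ∑_k r_k · vec(ρ_k) vec(ρ_k)ᴴ where each r_k > 0 and each ρ_k ∈ M_n(ℂ) is positive semidefinite and nonzero. Precisely: there is no finite family (r_k, ρ_k) with r_k > 0, ρ_k PosSemidef, ρ_k ≠ 0, such that for all a,b,c,d ∈ Fin n: (if (a,b) = (c,d) then 1 else 0) = ∑_k r_k * (ρ_k a b) * conj (ρ_k c d). -/
/-!
Take two distinct indices `i ≠ j`. The entry `((i,i),(j,j))` of the identity is `0`, so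
`∑ₖ rₖ ρₖ(i,i) ρₖ(j,j) = 0`, while the entry `((i,j),(i,j))` is `1 = ∑ₖ rₖ |ρₖ(i,j)|²`. For a positive
semidefinite matrix the `2 × 2` principal minor on `{i, j}` gives `|ρ(i,j)|² ≤ ρ(i,i) ρ(j,j)`, so the
second sum is at most the first, i.e. `1 ≤ 0`.
-/

open scoped ComplexOrder
open Matrix

theorem Matrix.PosSemidef.apply_mul_star_apply_le {𝕜 n : Type*} [RCLike 𝕜] [Fintype n]
    {A : Matrix n n 𝕜} (hA : A.PosSemidef) (i j : n) :
    A i j * star (A i j) ≤ A i i * A j j := by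
  have hdet := (hA.submatrix ![i, j]).det_nonneg
  simp only [det_fin_two, submatrix_apply, cons_val_zero, cons_val_one] at hdet
  rwa [sub_nonneg, ← hA.isHermitian.apply j i] at hdet

theorem identity_not_sum_vec_outer (n : ℕ) (hn : 2 ≤ n) :
    ¬ ∃ (N : ℕ) (r : Fin N → ℝ) (ρ : Fin N → Matrix (Fin n) (Fin n) ℂ),
      (∀ k, 0 < r k) ∧ (∀ k, (ρ k).PosSemidef) ∧ (∀ k, ρ k ≠ 0) ∧
      ∀ a b c d : Fin n,
        (if (a, b) = (c, d) then (1 : ℂ) else 0) =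
          ∑ k, (r k : ℂ) * ρ k a b * (starRingEnd ℂ) (ρ k c d) := by
  rintro ⟨N, r, ρ, hr, hρ, -, hsum⟩
  let i : Fin n := ⟨0, by omega⟩
  let j : Fin n := ⟨1, by omega⟩
  have hij : i ≠ j := by simp [i, j, Fin.ext_iff]
  have hdiag (k : Fin N) : (starRingEnd ℂ) (ρ k j j) = ρ k j j := (hρ k).isHermitian.apply j j
  have : (1 : ℂ) ≤ 0 := calc
    (1 : ℂ) = ∑ k, (r k : ℂ) * ρ k i j * (starRingEnd ℂ) (ρ k i j) := by simpa using hsum i j i j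
    _ ≤ ∑ k, (r k : ℂ) * ρ k i i * (starRingEnd ℂ) (ρ k j j) := by
      refine Finset.sum_le_sum fun k _ => ?_
      rw [mul_assoc, mul_assoc, hdiag]
      exact mul_le_mul_of_nonneg_left ((hρ k).apply_mul_star_apply_le i j)
        (by exact_mod_cast (hr k).le)
    _ = 0 := by simpa [hij] using (hsum i i j j).symm
  exact zero_lt_one.not_ge this
end

section
/- For n ≥ 2, there is no finite family of positive reals r_k and Hermitian matrices ρ_k ∈ M_n(ℂ) such that for all a,b,c,d ∈ Fin n: δ_{ac} δ_{bd} = ∑_k r_k * (ρ_k a b) * (ρ_k c d). -/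
theorem identity_tensor_not_double_mixture (n : ℕ) (hn : 2 ≤ n) :
    ¬ ∃ (N : ℕ) (r : Fin N → ℝ) (ρ : Fin N → Matrix (Fin n) (Fin n) ℂ),
      (∀ k, 0 < r k) ∧ (∀ k, (ρ k).IsHermitian) ∧
      ∀ a b c d : Fin n,
        (if a = c then (1 : ℂ) else 0) * (if b = d then (1 : ℂ) else 0) =
          ∑ k, (r k : ℂ) * ρ k a b * ρ k c d := by
  rintro ⟨N, r, ρ, hr, hherm, heq⟩
  set i : Fin n := ⟨0, by omega⟩ with hi
  set j : Fin n := ⟨1, by omega⟩ with hj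
  have hij : i ≠ j := by simp [hi, hj, Fin.ext_iff]
  have e1 := heq i j j i
  have e2 := heq i j i j
  rw [if_neg hij, zero_mul] at e1
  rw [if_pos rfl, if_pos rfl, one_mul] at e2
  -- rewrite ρ k j i = star (ρ k i j)
  have hstar : ∀ k, ρ k j i = star (ρ k i j) := fun k => ((hherm k).apply j i).symm ▸ rfl
  have hterm : ∀ k, (r k : ℂ) * ρ k i j * ρ k j i = ((r k * Complex.normSq (ρ k i j) : ℝ) : ℂ) := by
    intro k
    rw [hstar k, mul_assoc]
    rw [show ρ k i j * star (ρ k i j) = ((Complex.normSq (ρ k i j) : ℝ) : ℂ) from Complex.mul_conj _]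
    push_cast
    ring
  rw [Finset.sum_congr rfl (fun k _ => hterm k)] at e1
  rw [← Complex.ofReal_sum] at e1
  have hreal : ∑ k, r k * Complex.normSq (ρ k i j) = 0 := by
    exact_mod_cast e1.symm
  have hzero : ∀ k ∈ Finset.univ, r k * Complex.normSq (ρ k i j) = 0 := by
    refine (Finset.sum_eq_zero_iff_of_nonneg ?_).mp hreal
    intro k _
    exact mul_nonneg (hr k).le (Complex.normSq_nonneg _)
  have hρ : ∀ k, ρ k i j = 0 := by
    intro k
    have := hzero k (Finset.mem_univ k)
    have hns : Complex.normSq (ρ k i j) = 0 := by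
      rcases mul_eq_zero.mp this with h | h
      · exact absurd h (hr k).ne'
      · exact h
    exact Complex.normSq_eq_zero.mp hns
  simp [hρ] at e2
end

section
/- Define a 4-tensor Ψ : (Fin n)⁴ → ℂ to be doubly mixed if there exist finitely many nonnegative reals r_k and positive semidefinite matrices ρ_k ∈ M_n(ℂ) with Ψ a b c d = ∑_k r_k * (ρ_k a b) * (ρ_k c d); define Ψ to be doubly dilated if there exist m, p and φ : Fin n → Fin m → Fin p → ℂ with Ψ a b c d = ∑_{i,j,k,l} φ a i k * conj (φ b i l) * φ c j l * conj (φ d j k). Theorem: every doubly mixed tensor is doubly dilated. -/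
open scoped ComplexOrder

def DoublyMixed (n : ℕ) (Ψ : Fin n → Fin n → Fin n → Fin n → ℂ) : Prop :=
  ∃ (N : ℕ) (r : Fin N → ℝ) (ρ : Fin N → Matrix (Fin n) (Fin n) ℂ),
    (∀ k, 0 ≤ r k) ∧ (∀ k, (ρ k).PosSemidef) ∧
    ∀ a b c d, Ψ a b c d = ∑ k, (r k : ℂ) * ρ k a b * ρ k c d

def DoublyDilated (n : ℕ) (Ψ : Fin n → Fin n → Fin n → Fin n → ℂ) : Prop :=
  ∃ (m p : ℕ) (φ : Fin n → Fin m → Fin p → ℂ),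
    ∀ a b c d, Ψ a b c d =
      ∑ i, ∑ j, ∑ k, ∑ l,
        φ a i k * (starRingEnd ℂ) (φ b i l) * φ c j l * (starRingEnd ℂ) (φ d j k)

/-!
Each term `r ρ ⊗ ρ` of a doubly mixed tensor is `σ ⊗ σ` with `σ = √r • ρ` positive semidefinite.
Decomposing `σ = ∑ᵢ vᵢ vᵢᴴ` exhibits `σ ⊗ σ` as a dilation tensor, and dilation tensors are closed
under sums, a witness for the sum being the block-diagonal direct sum of the witnesses.
-/

section

variable {n : ℕ}

def dilationTensor {ι κ : Type*} [Fintype ι] [Fintype κ] (φ : Fin n → ι → κ → ℂ) :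
    Fin n → Fin n → Fin n → Fin n → ℂ :=
  fun a b c d => ∑ i, ∑ j, ∑ k, ∑ l,
    φ a i k * (starRingEnd ℂ) (φ b i l) * φ c j l * (starRingEnd ℂ) (φ d j k)

theorem doublyDilated_iff {Ψ : Fin n → Fin n → Fin n → Fin n → ℂ} :
    DoublyDilated n Ψ ↔ ∃ (m p : ℕ) (φ : Fin n → Fin m → Fin p → ℂ), Ψ = dilationTensor φ := by
  simp only [DoublyDilated, funext_iff, dilationTensor]

theorem doublyDilated_dilationTensor {ι κ : Type*} [Fintype ι] [Fintype κ]
    (φ : Fin n → ι → κ → ℂ) : DoublyDilated n (dilationTensor φ) := by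
  let e := Fintype.equivFin ι
  let f := Fintype.equivFin κ
  refine doublyDilated_iff.2 ⟨_, _, fun a i k => φ a (e.symm i) (f.symm k), ?_⟩
  funext a b c d
  simp only [dilationTensor, ← e.symm.sum_comp, ← f.symm.sum_comp]

def blockDiag {ι₁ ι₂ κ₁ κ₂ : Type*} (φ₁ : Fin n → ι₁ → κ₁ → ℂ) (φ₂ : Fin n → ι₂ → κ₂ → ℂ)
    (a : Fin n) : ι₁ ⊕ ι₂ → κ₁ ⊕ κ₂ → ℂ
  | .inl i, .inl k => φ₁ a i k
  | .inr i, .inr k => φ₂ a i k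
  | _, _ => 0

-- All four indices of a nonzero term of the dilation sum lie in the same block.
theorem dilationTensor_blockDiag {ι₁ ι₂ κ₁ κ₂ : Type*} [Fintype ι₁] [Fintype ι₂]
    [Fintype κ₁] [Fintype κ₂] (φ₁ : Fin n → ι₁ → κ₁ → ℂ) (φ₂ : Fin n → ι₂ → κ₂ → ℂ) :
    dilationTensor (blockDiag φ₁ φ₂) = dilationTensor φ₁ + dilationTensor φ₂ := by
  funext a b c d
  simp [dilationTensor, blockDiag, Fintype.sum_sum_type]

theorem DoublyDilated.add {Ψ₁ Ψ₂ : Fin n → Fin n → Fin n → Fin n → ℂ}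
    (h₁ : DoublyDilated n Ψ₁) (h₂ : DoublyDilated n Ψ₂) : DoublyDilated n (Ψ₁ + Ψ₂) := by
  obtain ⟨m₁, p₁, φ₁, rfl⟩ := doublyDilated_iff.1 h₁
  obtain ⟨m₂, p₂, φ₂, rfl⟩ := doublyDilated_iff.1 h₂
  rw [← dilationTensor_blockDiag]
  exact doublyDilated_dilationTensor _

theorem doublyDilated_zero : DoublyDilated n 0 :=
  ⟨0, 0, fun _ => finZeroElim, fun _ _ _ _ => by simp⟩

theorem DoublyDilated.sum {ι : Type*} {s : Finset ι} {Ψ : ι → Fin n → Fin n → Fin n → Fin n → ℂ}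
    (h : ∀ k ∈ s, DoublyDilated n (Ψ k)) : DoublyDilated n (∑ k ∈ s, Ψ k) :=
  Finset.sum_induction _ _ (fun _ _ => .add) doublyDilated_zero h

-- Writing `σ = ∑ᵢ vᵢ vᵢᴴ`, the vectors `vᵢ` form a dilation with a one-point second index.
theorem doublyDilated_mul_of_posSemidef {σ : Matrix (Fin n) (Fin n) ℂ} (hσ : σ.PosSemidef) :
    DoublyDilated n (fun a b c d => σ a b * σ c d) := by
  obtain ⟨m, v, rfl⟩ := Matrix.posSemidef_iff_eq_sum_vecMulVec.1 hσ
  refine ⟨m, 1, fun a i _ => v i a, fun a b c d => ?_⟩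
  simp [Matrix.sum_apply, Matrix.vecMulVec_apply, Finset.sum_mul_sum, mul_assoc]

end

theorem doublyMixed_doublyDilated {n : ℕ} (Ψ : Fin n → Fin n → Fin n → Fin n → ℂ)
    (h : DoublyMixed n Ψ) : DoublyDilated n Ψ := by
  obtain ⟨N, r, ρ, hr, hρ, hΨ⟩ := h
  let σ k := (Real.sqrt (r k) : ℂ) • ρ k
  have hσ k : (σ k).PosSemidef := (hρ k).smul (by positivity)
  have hΨσ : Ψ = ∑ k, fun a b c d => σ k a b * σ k c d := by
    funext a b c d
    simp only [hΨ, Finset.sum_apply, σ, Matrix.smul_apply, smul_eq_mul]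
    refine Finset.sum_congr rfl fun k _ => ?_
    have hsqrt : (r k : ℂ) = Real.sqrt (r k) * Real.sqrt (r k) := by
      exact_mod_cast (Real.mul_self_sqrt (hr k)).symm
    rw [hsqrt]
    ring
  rw [hΨσ]
  exact .sum fun k _ => doublyDilated_mul_of_posSemidef (hσ k)
end

section
/- For n ≥ 2, the tensor Ψ : (Fin n)⁴ → ℂ defined by Ψ a b c d = δ_{ad} · δ_{bc} is doubly dilated but not doubly mixed. In particular, for n ≥ 2 the set of doubly mixed tensors is a proper subset of the set of doubly dilated tensors. -/
open scoped ComplexOrder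

/-!
A doubly mixed tensor is doubly dilated: factor `√r_k • ρ_k = C_k C_kᴴ` and take
`φ a (k, x) k' = δ_{k k'} (C_k)_{a x}`; the dilation sum then collapses to
`∑_k (C_k C_kᴴ)_{a b} (C_k C_kᴴ)_{c d}`.

The swap tensor is not doubly mixed: the `2 × 2` principal minors of each `ρ_k` are nonnegative,
so every doubly mixed `Ψ` satisfies `Ψ i j j i ≤ Ψ i i j j`, whereas for the swap tensor and
`i ≠ j` these entries are `1` and `0`.
-/

open Matrix

theorem Matrix.PosSemidef.apply_mul_apply_le {ι 𝕜 : Type*} [RCLike 𝕜] {A : Matrix ι ι 𝕜}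
    (hA : A.PosSemidef) (i j : ι) : A i j * A j i ≤ A i i * A j j := by
  have hdet := (hA.submatrix ![i, j]).det_nonneg
  rw [det_fin_two] at hdet
  simpa using hdet

theorem DoublyMixed.apply_swap_le {n : ℕ} {Ψ : Fin n → Fin n → Fin n → Fin n → ℂ}
    (h : DoublyMixed n Ψ) (i j : Fin n) : Ψ i j j i ≤ Ψ i i j j := by
  obtain ⟨N, r, ρ, hr, hρ, hΨ⟩ := h
  rw [hΨ, hΨ]
  refine Finset.sum_le_sum fun k _ => ?_
  simp only [mul_assoc]
  exact mul_le_mul_of_nonneg_left ((hρ k).apply_mul_apply_le i j)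
    (Complex.zero_le_real.mpr (hr k))

theorem doublyDilated_of_fintype {n : ℕ} {ι κ : Type*} [Fintype ι] [Fintype κ]
    {Ψ : Fin n → Fin n → Fin n → Fin n → ℂ} (φ : Fin n → ι → κ → ℂ)
    (h : ∀ a b c d, Ψ a b c d = ∑ i, ∑ j, ∑ k, ∑ l,
      φ a i k * (starRingEnd ℂ) (φ b i l) * φ c j l * (starRingEnd ℂ) (φ d j k)) :
    DoublyDilated n Ψ := by
  let eι := Fintype.equivFin ι
  let eκ := Fintype.equivFin κ
  refine ⟨_, _, fun a i k => φ a (eι.symm i) (eκ.symm k), fun a b c d => ?_⟩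
  rw [h]
  symm
  exact Fintype.sum_equiv eι.symm _ _ fun i => Fintype.sum_equiv eι.symm _ _ fun j =>
    Fintype.sum_equiv eκ.symm _ _ fun k => Fintype.sum_equiv eκ.symm _ _ fun l => rfl

theorem doublyDilated_sum_mul_conjTranspose {n : ℕ} {κ q : Type*} [Fintype κ] [DecidableEq κ]
    [Fintype q] (C : κ → Matrix (Fin n) q ℂ) :
    DoublyDilated n fun a b c d => ∑ k, (C k * (C k)ᴴ) a b * (C k * (C k)ᴴ) c d := by
  refine doublyDilated_of_fintype (fun a (i : κ × q) k => if i.1 = k then C i.1 a i.2 else 0)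
    fun a b c d => ?_
  -- the Kronecker deltas force `i.1 = j.1 = k = l`
  simp [Fintype.sum_prod_type, mul_apply, Finset.sum_mul_sum, apply_ite (starRingEnd ℂ), ite_mul,
    mul_ite, mul_assoc]

open scoped MatrixOrder in
theorem DoublyMixed.doublyDilated {n : ℕ} {Ψ : Fin n → Fin n → Fin n → Fin n → ℂ}
    (h : DoublyMixed n Ψ) : DoublyDilated n Ψ := by
  obtain ⟨N, r, ρ, hr, hρ, hΨ⟩ := h
  have hσ (k) : 0 ≤ (Real.sqrt (r k) : ℂ) • ρ k :=
    ((hρ k).smul (Complex.zero_le_real.mpr (Real.sqrt_nonneg _))).nonneg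
  choose C hC using fun k => CStarAlgebra.nonneg_iff_eq_mul_star_self.mp (hσ k)
  convert doublyDilated_sum_mul_conjTranspose C using 1
  ext a b c d
  simp only [hΨ, ← star_eq_conjTranspose, ← hC, Matrix.smul_apply, smul_eq_mul]
  refine Finset.sum_congr rfl fun k _ => ?_
  rw [mul_mul_mul_comm, ← Complex.ofReal_mul, Real.mul_self_sqrt (hr k), mul_assoc]

def swapTensor (n : ℕ) : Fin n → Fin n → Fin n → Fin n → ℂ :=
  fun a b c d => (if a = d then 1 else 0) * (if b = c then 1 else 0)

theorem doublyDilated_swapTensor (n : ℕ) : DoublyDilated n (swapTensor n) := by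
  refine ⟨1, n, fun a _ k => if a = k then 1 else 0, fun a b c d => ?_⟩
  simp [swapTensor, apply_ite (starRingEnd ℂ), mul_ite]

theorem not_doublyMixed_swapTensor {n : ℕ} (hn : 2 ≤ n) : ¬ DoublyMixed n (swapTensor n) := by
  intro h
  have := h.apply_swap_le ⟨0, by omega⟩ ⟨1, by omega⟩
  norm_num [swapTensor] at this

theorem swap_tensor_dilated_not_mixed (n : ℕ) (hn : 2 ≤ n) :
    (DoublyDilated n (fun a b c d =>
        (if a = d then (1 : ℂ) else 0) * (if b = c then (1 : ℂ) else 0)) ∧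
      ¬ DoublyMixed n (fun a b c d =>
        (if a = d then (1 : ℂ) else 0) * (if b = c then (1 : ℂ) else 0))) ∧
    {Ψ : Fin n → Fin n → Fin n → Fin n → ℂ | DoublyMixed n Ψ} ⊂
      {Ψ | DoublyDilated n Ψ} := by
  have hdil := doublyDilated_swapTensor n
  have hnot := not_doublyMixed_swapTensor hn
  exact ⟨⟨hdil, hnot⟩, fun _ => DoublyMixed.doublyDilated, fun hsub => hnot (hsub hdil)⟩
end

section
/- If Ψ : (Fin n)⁴ → ℂ is doubly dilated, then the n²×n² matrix M₁ defined by M₁ (a,b) (d,c) = Ψ a b c d (rows indexed by (a,b), columns by (d,c)) is positive semidefinite. -/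
open scoped ComplexOrder

private lemma sum4_comm {M : Type*} [AddCommMonoid M] {α β γ δ : Type*}
    [Fintype α] [Fintype β] [Fintype γ] [Fintype δ] (f : α → β → γ → δ → M) :
    ∑ c : γ, ∑ d : δ, ∑ a : α, ∑ b : β, f a b c d
      = ∑ a : α, ∑ b : β, ∑ c : γ, ∑ d : δ, f a b c d := by
  calc ∑ c : γ, ∑ d : δ, ∑ a : α, ∑ b : β, f a b c d
      = ∑ c : γ, ∑ a : α, ∑ d : δ, ∑ b : β, f a b c d :=
        Finset.sum_congr rfl fun c _ => Finset.sum_comm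
    _ = ∑ a : α, ∑ c : γ, ∑ d : δ, ∑ b : β, f a b c d := Finset.sum_comm
    _ = ∑ a : α, ∑ c : γ, ∑ b : β, ∑ d : δ, f a b c d :=
        Finset.sum_congr rfl fun a _ => Finset.sum_congr rfl fun c _ => Finset.sum_comm
    _ = ∑ a : α, ∑ b : β, ∑ c : γ, ∑ d : δ, f a b c d :=
        Finset.sum_congr rfl fun a _ => Finset.sum_comm

theorem doublyDilated_M1_posSemidef {n : ℕ} (Ψ : Fin n → Fin n → Fin n → Fin n → ℂ)
    (h : DoublyDilated n Ψ) :
    Matrix.PosSemidef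
      (Matrix.of fun (p q : Fin n × Fin n) => Ψ p.1 p.2 q.2 q.1) := by
  obtain ⟨m, p, φ, hφ⟩ := h
  set G : Matrix (Fin n × Fin n) (Fin p × Fin p) ℂ :=
    Matrix.of fun ab kl => ∑ i, φ ab.1 i kl.1 * (starRingEnd ℂ) (φ ab.2 i kl.2) with hG
  have key : (Matrix.of fun (p q : Fin n × Fin n) => Ψ p.1 p.2 q.2 q.1)
      = G * G.conjTranspose := by
    ext ⟨a, b⟩ ⟨d, c⟩
    simp only [Matrix.of_apply, Matrix.mul_apply, Matrix.conjTranspose_apply, hG, hφ,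
      Fintype.sum_prod_type, star_sum, star_mul', Complex.star_def, Complex.conj_conj,
      Finset.mul_sum, Finset.sum_mul]
    rw [sum4_comm (fun j i k l => φ a i k * (starRingEnd ℂ) (φ b i l)
      * ((starRingEnd ℂ) (φ d j k) * φ c j l))]
    conv_rhs => rw [Finset.sum_comm]
    refine Finset.sum_congr rfl fun i _ => Finset.sum_congr rfl fun j _ =>
      Finset.sum_congr rfl fun k _ => Finset.sum_congr rfl fun l _ => ?_
    ring
  rw [key]
  exact Matrix.posSemidef_self_mul_conjTranspose G
end
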